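/- arXiv:0908.3580 — 5 statements merged into one kernel-verified Lean document; each statement's English description precedes it below -/
import Mathlib

section
/- For abelian groups A₁ and A₂, there is an isomorphism Γ₂(A₁ ⊕ A₂) ≅ Γ₂(A₁) ⊕ Γ₂(A₂) ⊕ (A₁ ⊗ A₂). -/
/-!
The forward map sends `γ(a, b)` to `(γ a, γ b, a ⊗ b)`; its last component is well defined
because the diagonal `x ↦ β x x` of any biadditive `β` satisfies the relations of `Γ₂`.
The inverse uses the polarization `[x, y] = γ(x + y) - γ x - γ y`, which the cube relation
makes biadditive: `(u, v, a ⊗ b)` goes to `u + v + [(a, 0), (0, b)]`, embedding `Γ₂(A₁)` and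
`Γ₂(A₂)` by functoriality. Both composites are then checked on generators.
-/

/-- The subgroup of relations defining Whitehead's universal quadratic functor `Γ₂`. -/
def gammaRels (A : Type) [AddCommGroup A] : AddSubgroup (FreeAbelianGroup A) :=
  AddSubgroup.closure
    ({x | ∃ a : A, x = FreeAbelianGroup.of (-a) - FreeAbelianGroup.of a} ∪
     {x | ∃ a b c : A,
        x = FreeAbelianGroup.of (a + b + c) - FreeAbelianGroup.of (a + b)
          - FreeAbelianGroup.of (b + c) - FreeAbelianGroup.of (a + c)
          + FreeAbelianGroup.of a + FreeAbelianGroup.of b + FreeAbelianGroup.of c})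

/-- Whitehead's universal quadratic group `Γ₂(A)`: generated by symbols `γ(x)`, `x ∈ A`,
subject to `γ(-x) = γ(x)` and
`γ(x+y+z) - γ(x+y) - γ(y+z) - γ(x+z) + γ(x) + γ(y) + γ(z) = 0`. -/
def Gamma2 (A : Type) [AddCommGroup A] : Type := FreeAbelianGroup A ⧸ gammaRels A

instance (A : Type) [AddCommGroup A] : AddCommGroup (Gamma2 A) :=
  inferInstanceAs (AddCommGroup (FreeAbelianGroup A ⧸ gammaRels A))

/-- The canonical generator `γ(a) ∈ Γ₂(A)`. -/
def gamma {A : Type} [AddCommGroup A] (a : A) : Gamma2 A :=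
  QuotientAddGroup.mk (FreeAbelianGroup.of a)


open TensorProduct

namespace Gamma2

variable {A B M : Type} [AddCommGroup A] [AddCommGroup B] [AddCommGroup M]

theorem gamma_neg (a : A) : gamma (-a) = gamma a := by
  rw [← sub_eq_zero]
  exact (QuotientAddGroup.eq_zero_iff _).mpr (AddSubgroup.subset_closure (Or.inl ⟨a, rfl⟩))

theorem gamma_cube (a b c : A) :
    gamma (a + b + c) - gamma (a + b) - gamma (b + c) - gamma (a + c)
      + gamma a + gamma b + gamma c = 0 :=
  (QuotientAddGroup.eq_zero_iff _).mpr (AddSubgroup.subset_closure (Or.inr ⟨a, b, c, rfl⟩))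

theorem gamma_add_add (a b c : A) :
    gamma (a + b + c) = gamma (a + b) + gamma (b + c) + gamma (a + c)
      - gamma a - gamma b - gamma c := by
  rw [← sub_eq_zero, ← gamma_cube a b c]
  abel

@[simp]
theorem gamma_zero : gamma (0 : A) = 0 := by
  simpa using gamma_cube (0 : A) 0 0

def lift (φ : A → M) (h_neg : ∀ a, φ (-a) = φ a)
    (h_cube : ∀ a b c,
      φ (a + b + c) - φ (a + b) - φ (b + c) - φ (a + c) + φ a + φ b + φ c = 0) :
    Gamma2 A →+ M :=
  QuotientAddGroup.lift _ (FreeAbelianGroup.lift φ) <| (AddSubgroup.closure_le _).mpr <| by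
    rintro _ (⟨a, rfl⟩ | ⟨a, b, c, rfl⟩) <;> simp [h_neg, h_cube]

@[simp]
theorem lift_gamma (φ : A → M) (h_neg) (h_cube) (a : A) :
    lift φ h_neg h_cube (gamma a) = φ a :=
  FreeAbelianGroup.lift_apply_of φ a

theorem hom_ext {f g : Gamma2 A →+ M} (h : ∀ a, f (gamma a) = g (gamma a)) : f = g :=
  QuotientAddGroup.addMonoidHom_ext _ (FreeAbelianGroup.lift_ext _ _ h)

def map (f : A →+ B) : Gamma2 A →+ Gamma2 B :=
  lift (fun a => gamma (f a)) (by simp [gamma_neg])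
    (fun a b c => by simpa only [map_add] using gamma_cube (f a) (f b) (f c))

@[simp]
theorem map_gamma (f : A →+ B) (a : A) : map f (gamma a) = gamma (f a) :=
  lift_gamma ..

def liftDiag (β : A →+ A →+ M) : Gamma2 A →+ M :=
  lift (fun a => β a a) (by simp)
    (fun a b c => by simp only [map_add, AddMonoidHom.add_apply]; abel)

@[simp]
theorem liftDiag_gamma (β : A →+ A →+ M) (a : A) : liftDiag β (gamma a) = β a a :=
  lift_gamma ..

def polar : A →+ A →+ Gamma2 A :=
  AddMonoidHom.mk'
    (fun x => AddMonoidHom.mk' (fun y => gamma (x + y) - gamma x - gamma y) fun y y' => by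
      rw [← add_assoc, gamma_add_add]
      abel)
    fun x x' => by
      ext y
      simp only [AddMonoidHom.mk'_apply, AddMonoidHom.add_apply, gamma_add_add]
      abel

@[simp]
theorem polar_apply (x y : A) : polar x y = gamma (x + y) - gamma x - gamma y :=
  rfl

def cross : A ⊗[ℤ] B →+ Gamma2 (A × B) :=
  liftAddHom ((polar.comp (AddMonoidHom.inl A B)).compl₂ (AddMonoidHom.inr A B))
    fun n a b => by simp only [map_zsmul, AddMonoidHom.smul_apply]

@[simp]
theorem cross_tmul (a : A) (b : B) :
    cross (a ⊗ₜ b) = gamma (a, b) - gamma (a, 0) - gamma ((0 : A), b) := by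
  simp [cross]

def toProd : Gamma2 (A × B) →+ Gamma2 A × Gamma2 B × A ⊗[ℤ] B :=
  (map (AddMonoidHom.fst A B)).prod <| (map (AddMonoidHom.snd A B)).prod <| liftDiag <|
    ((LinearMap.toAddMonoidHom'.comp (TensorProduct.mk ℤ A B).toAddMonoidHom).comp
      (AddMonoidHom.fst A B)).compl₂ (AddMonoidHom.snd A B)

@[simp]
theorem toProd_gamma (p : A × B) : toProd (gamma p) = (gamma p.1, gamma p.2, p.1 ⊗ₜ p.2) := by
  simp [toProd]

def ofProd : Gamma2 A × Gamma2 B × A ⊗[ℤ] B →+ Gamma2 (A × B) :=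
  (map (AddMonoidHom.inl A B)).coprod <| (map (AddMonoidHom.inr A B)).coprod cross

theorem ofProd_comp_toProd : ofProd.comp toProd = AddMonoidHom.id (Gamma2 (A × B)) :=
  hom_ext fun p => by simp [ofProd]

theorem toProd_comp_ofProd :
    toProd.comp ofProd = AddMonoidHom.id (Gamma2 A × Gamma2 B × A ⊗[ℤ] B) := by
  have h_inl : toProd.comp (map (AddMonoidHom.inl A B)) = AddMonoidHom.inl _ _ :=
    hom_ext fun a => by simp
  have h_inr : toProd.comp (map (AddMonoidHom.inr A B)) =
      (AddMonoidHom.inr _ _).comp (AddMonoidHom.inl _ _) :=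
    hom_ext fun b => by simp
  have h_cross : toProd.comp (cross (A := A) (B := B)) =
      (AddMonoidHom.inr _ _).comp (AddMonoidHom.inr _ _) :=
    AddMonoidHom.ext fun t => by
      induction t using TensorProduct.induction_on with
      | zero => simp [Prod.ext_iff]
      | tmul a b => simp
      | add t t' ht ht' => rw [map_add, map_add, ht, ht']
  rw [ofProd, AddMonoidHom.comp_coprod, AddMonoidHom.comp_coprod, h_inl, h_inr, h_cross,
    ← AddMonoidHom.comp_coprod, AddMonoidHom.coprod_inl_inr, AddMonoidHom.comp_id,
    AddMonoidHom.coprod_inl_inr]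

end Gamma2

/-- For abelian groups `A₁`, `A₂`, there is an isomorphism
`Γ₂(A₁ ⊕ A₂) ≅ Γ₂(A₁) ⊕ Γ₂(A₂) ⊕ (A₁ ⊗ A₂)`. -/
theorem gamma2_prod (A₁ A₂ : Type) [AddCommGroup A₁] [AddCommGroup A₂] :
    Nonempty (Gamma2 (A₁ × A₂) ≃+ (Gamma2 A₁ × Gamma2 A₂ × TensorProduct ℤ A₁ A₂)) :=
  ⟨AddMonoidHom.toAddEquiv Gamma2.toProd Gamma2.ofProd Gamma2.ofProd_comp_toProd
    Gamma2.toProd_comp_ofProd⟩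
end

section
/- For any abelian group A, the group Γ₂(A) is abelian; i.e., the defining relations γ(-x) = γ(x) and γ(x+y+z) - γ(x+y) - γ(y+z) - γ(x+z) + γ(x) + γ(y) + γ(z) = 0 in the group generated by the symbols γ(x), x ∈ A, force the group to be commutative. -/
/-!
The relation at `(0, 0, 0)` gives `γ(0) = 1`. The relations at `(a, b, -b)` and `(b, a, -b)` then
read `P · γ(a)γ(b) · γ(-b) = 1` and `P · γ(b)γ(a) · γ(-b) = 1` with the same
`P = γ(a)γ(a+b)⁻¹γ(a-b)⁻¹`, so any two generators commute, and a group generated by pairwise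
commuting elements is abelian.
-/

/-- The defining relator words for Whitehead's group `Γ₂(A)`, written multiplicatively in the
free group on the symbols `γ(x)`, `x ∈ A`:  `γ(-a)·γ(a)⁻¹` and
`γ(a+b+c)·γ(a+b)⁻¹·γ(b+c)⁻¹·γ(a+c)⁻¹·γ(a)·γ(b)·γ(c)`. -/
def gammaRelWords (A : Type) [AddCommGroup A] : Set (FreeGroup A) :=
  {w | ∃ a : A, w = FreeGroup.of (-a) * (FreeGroup.of a)⁻¹} ∪
  {w | ∃ a b c : A,
    w = FreeGroup.of (a + b + c) * (FreeGroup.of (a + b))⁻¹ * (FreeGroup.of (b + c))⁻¹ *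
        (FreeGroup.of (a + c))⁻¹ * FreeGroup.of a * FreeGroup.of b * FreeGroup.of c}

/-- `Γ₂(A)` as an a priori nonabelian group: the group presented by generators `γ(x)`, `x ∈ A`,
and the defining relations of Whitehead's universal quadratic functor. -/
def Gamma2Presented (A : Type) [AddCommGroup A] : Type := PresentedGroup (gammaRelWords A)

instance (A : Type) [AddCommGroup A] : Group (Gamma2Presented A) :=
  inferInstanceAs (Group (PresentedGroup (gammaRelWords A)))

theorem PresentedGroup.mul_comm_of_commute_of {α : Type*} {rels : Set (FreeGroup α)}
    (h : ∀ a b : α, Commute (of a : PresentedGroup rels) (of b)) (x y : PresentedGroup rels) :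
    x * y = y * x := by
  have hcomm : ∀ u ∈ Set.range (of : α → PresentedGroup rels), ∀ v ∈ Set.range of,
      u * v = v * u := by
    rintro _ ⟨a, rfl⟩ _ ⟨b, rfl⟩
    exact h a b
  have hle := (closure_range_of rels).symm.trans_le (Subgroup.closure_le_centralizer_centralizer _)
  exact Set.centralizer_centralizer_comm_of_comm hcomm x (hle trivial) y (hle trivial)

namespace Gamma2Presented

variable {A : Type} [AddCommGroup A]

def γ (a : A) : Gamma2Presented A := PresentedGroup.of a

theorem γ_add_add_relation (a b c : A) :
    γ (a + b + c) * (γ (a + b))⁻¹ * (γ (b + c))⁻¹ * (γ (a + c))⁻¹ * γ a * γ b * γ c = 1 := by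
  have h := PresentedGroup.one_of_mem (rels := gammaRelWords A) (Or.inr ⟨a, b, c, rfl⟩)
  simp only [map_mul, map_inv] at h
  exact h

theorem γ_zero : γ (0 : A) = 1 := by
  have h := γ_add_add_relation (0 : A) 0 0
  simp only [add_zero] at h
  group at h
  exact h

theorem commute_γ (a b : A) : Commute (γ a) (γ b) := by
  have h₁ := γ_add_add_relation a b (-b)
  have h₂ := γ_add_add_relation b a (-b)
  rw [add_neg_cancel_right, add_neg_cancel, γ_zero, inv_one, mul_one] at h₁
  rw [add_neg_cancel_comm, add_comm b a, add_neg_cancel, γ_zero, inv_one, mul_one] at h₂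
  simpa only [mul_assoc, mul_right_inj, commute_iff_eq] using mul_right_cancel (h₁.trans h₂.symm)

end Gamma2Presented

/-- For any abelian group `A`, the group `Γ₂(A)` is abelian: the defining
relations force the presented group to be commutative. -/
theorem gamma2Presented_comm (A : Type) [AddCommGroup A]
    (x y : Gamma2Presented A) : x * y = y * x :=
  PresentedGroup.mul_comm_of_commute_of Gamma2Presented.commute_γ x y
end

section
/- For any cyclic abelian group A, the third super-Lie functor vanishes: 𝓛ₛ³(A) = 0. -/
open TensorProduct

/-- The third super-Lie functor `𝓛ₛ³(A)`: the subgroup of `A ⊗ A ⊗ A` which is the image of the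
endomorphism `l(a⊗b⊗c) = a⊗b⊗c + b⊗a⊗c - c⊗a⊗b - c⊗b⊗a`, i.e. the subgroup generated by the
elements `{a,b,c} = a⊗b⊗c + b⊗a⊗c - c⊗a⊗b - c⊗b⊗a`. -/
noncomputable def Ls3 (A : Type) [AddCommGroup A] : AddSubgroup (A ⊗[ℤ] (A ⊗[ℤ] A)) :=
  AddSubgroup.closure {x | ∃ a b c : A,
    x = a ⊗ₜ[ℤ] (b ⊗ₜ[ℤ] c) + b ⊗ₜ[ℤ] (a ⊗ₜ[ℤ] c)
      - c ⊗ₜ[ℤ] (a ⊗ₜ[ℤ] b) - c ⊗ₜ[ℤ] (b ⊗ₜ[ℤ] a)}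

/-! In a cyclic group with generator `g`, the tensor `(m g) ⊗ (n g) ⊗ (p g)` is `(m n p) • g ⊗ g ⊗ g`,
and the coefficient `m n p` is symmetric in `m, n, p`; so the four terms of every generator of
`𝓛ₛ³(A)` cancel. -/

lemma zsmul_tmul_zsmul {M N : Type*} [AddCommGroup M] [AddCommGroup N] (x : M) (y : N)
    (m n : ℤ) : (m • x) ⊗ₜ[ℤ] (n • y) = (m * n) • (x ⊗ₜ[ℤ] y) := by
  rw [← smul_tmul', tmul_smul, smul_smul]

lemma zsmul_tmul_zsmul_tmul_zsmul {A : Type*} [AddCommGroup A] (g : A) (m n p : ℤ) :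
    (m • g) ⊗ₜ[ℤ] ((n • g) ⊗ₜ[ℤ] (p • g)) = (m * n * p) • (g ⊗ₜ[ℤ] (g ⊗ₜ[ℤ] g)) := by
  rw [zsmul_tmul_zsmul, zsmul_tmul_zsmul, mul_assoc]

/-- For any cyclic abelian group `A`, the third super-Lie functor vanishes:
`𝓛ₛ³(A) = 0`. -/
theorem ls3_of_cyclic (A : Type) [AddCommGroup A] [IsAddCyclic A] : Ls3 A = ⊥ := by
  obtain ⟨g, hg⟩ := IsAddCyclic.exists_generator (α := A)
  refine le_bot_iff.1 ((AddSubgroup.closure_le _).2 ?_)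
  rintro _ ⟨a, b, c, rfl⟩
  obtain ⟨m, rfl⟩ := hg a
  obtain ⟨n, rfl⟩ := hg b
  obtain ⟨p, rfl⟩ := hg c
  rw [SetLike.mem_coe, AddSubgroup.mem_bot]
  simp only [zsmul_tmul_zsmul_tmul_zsmul, ← add_smul, ← sub_smul]
  rw [show m * n * p + n * m * p - p * m * n - p * n * m = 0 by ring, zero_smul]
end

section
/- For k ≥ 1, the first derived functor of the antisymmetric square on ℤ/2^k is cyclic: L₁⊗̃²(ℤ/2^k) ≅ ℤ/2^{k+1}. Concretely, using the flat resolution 0 → ℤ --(2^k)--> ℤ → ℤ/2^k → 0, the first homology of the induced complex ℤ --(2·2^k)--> ℤ --(2^k)--> ℤ/2 computing L⊗̃² is ℤ/2^{k+1}. -/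
/-- For `k ≥ 1`, the first derived functor of the antisymmetric square on
`ℤ/2^k` is `ℤ/2^{k+1}`: for the complex `ℤ --(2·2^k)--> ℤ --(2^k)--> ℤ/2` (degrees 2, 1, 0)
computing `L⊗̃²(ℤ/2^k)`, the homology at the middle term is `ℤ/2^{k+1}`. -/
theorem derived_antisym_square (k : ℕ) (hk : 1 ≤ k)
    (d₂ : ℤ →+ ℤ) (d₁ : ℤ →+ ZMod 2)
    (hd₂ : ∀ x : ℤ, d₂ x = 2 * 2 ^ k * x)
    (hd₁ : ∀ x : ℤ, d₁ x = ((2 ^ k * x : ℤ) : ZMod 2)) :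
    Nonempty ((d₁.ker ⧸ d₂.range.addSubgroupOf d₁.ker) ≃+ ZMod (2 ^ (k + 1))) := by
  have hker : d₁.ker = ⊤ := by
    ext x
    simp only [AddMonoidHom.mem_ker, AddSubgroup.mem_top, iff_true, hd₁]
    have : (2 : ℤ) ∣ 2 ^ k * x := dvd_mul_of_dvd_left (dvd_pow_self 2 (by omega)) x
    exact_mod_cast (ZMod.intCast_zmod_eq_zero_iff_dvd _ 2).2 this
  let e : d₁.ker ≃+ ℤ := (AddEquiv.addSubgroupCongr hker).trans AddSubgroup.topEquiv
  have hmap : (d₂.range.addSubgroupOf d₁.ker).map e.toAddMonoidHom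
      = AddSubgroup.zmultiples ((2 ^ (k + 1) : ℕ) : ℤ) := by
    ext x
    constructor
    · rintro ⟨⟨y, hy⟩, hmem, rfl⟩
      rcases hmem with ⟨z, hz⟩
      refine ⟨z, ?_⟩
      have hyz : (y : ℤ) = 2 * 2 ^ k * z := by
        have h2 : d₂ z = y := hz
        rw [hd₂] at h2; exact h2.symm
      have he : e.toAddMonoidHom ⟨y, hy⟩ = y := rfl
      show z • ((2 ^ (k + 1) : ℕ) : ℤ) = e.toAddMonoidHom ⟨y, hy⟩
      rw [he, hyz, zsmul_eq_mul]
      push_cast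
      ring
    · rintro ⟨z, rfl⟩
      refine ⟨⟨(2 * 2 ^ k * z : ℤ), by rw [hker]; trivial⟩,
        (AddSubgroup.mem_addSubgroupOf).2 ⟨z, hd₂ z⟩, ?_⟩
      show ((2 * 2 ^ k * z : ℤ)) = z • ((2 ^ (k + 1) : ℕ) : ℤ)
      rw [zsmul_eq_mul]
      push_cast
      ring
  exact ⟨(QuotientAddGroup.congr _ _ e hmap).trans
    (Int.quotientZMultiplesNatEquivZMod (2 ^ (k + 1)))⟩
end

section
/- For r₂ > r₁ ≥ 1 there is a right exact sequence ℤ --(2^{r₁}, λ)--> ℤ/2^{r₂} ⊕ C → Q → 0 where: if r₁ = 1 then C = ℤ/4 and λ : ℤ → ℤ/4 is surjective, giving Q ≅ ℤ/4 when r₂ = 2 and Q ≅ ℤ/8 when r₂ ≥ 3; if r₁ > 1 then C = ℤ/2 ⊕ ℤ/2 and λ : ℤ → ℤ/2 ⊕ ℤ/2 is nontrivial, giving Q ≅ ℤ/2^{r₁+1} ⊕ ℤ/2. -/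
open AddSubgroup

private lemma key {G H : Type} [AddCommGroup G] [AddCommGroup H] [Finite G] [Finite H]
    (ψ : ℤ →+ G) (φ : G →+ H) (hs : Function.Surjective φ)
    (h0 : φ (ψ 1) = 0)
    (hcard : Nat.card G = Nat.card H * addOrderOf (ψ 1)) :
    Nonempty ((G ⧸ ψ.range) ≃+ H) := by
  have hψ : ∀ n : ℤ, ψ n = n • ψ 1 := fun n => by
    rw [← map_zsmul, smul_eq_mul, mul_one]
  have hrange : ψ.range = zmultiples (ψ 1) := by
    ext x
    simp only [AddMonoidHom.mem_range, mem_zmultiples_iff]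
    exact ⟨fun ⟨n, h⟩ => ⟨n, (hψ n).symm.trans h⟩, fun ⟨n, h⟩ => ⟨n, (hψ n).trans h⟩⟩
  have hle : ψ.range ≤ φ.ker := by
    rintro x ⟨n, rfl⟩
    rw [AddMonoidHom.mem_ker, hψ, map_zsmul, h0, smul_zero]
  have e1 : (G ⧸ φ.ker) ≃+ H := QuotientAddGroup.quotientKerEquivOfSurjective φ hs
  have hck : Nat.card φ.ker = addOrderOf (ψ 1) := by
    have h1 := AddSubgroup.card_eq_card_quotient_mul_card_addSubgroup φ.ker
    rw [Nat.card_congr e1.toEquiv, hcard] at h1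
    have : Nonempty H := ⟨0⟩
    exact (Nat.eq_of_mul_eq_mul_left Nat.card_pos h1.symm)
  have heq : ψ.range = φ.ker := by
    apply AddSubgroup.eq_of_le_of_card_ge hle
    rw [hck, hrange, Nat.card_zmultiples]
  rw [heq]
  exact ⟨e1⟩

private lemma ord2pow (r₁ r₂ : ℕ) (h : r₁ ≤ r₂) :
    addOrderOf ((2 : ZMod (2 ^ r₂)) ^ r₁) = 2 ^ (r₂ - r₁) := by
  have h1 : ((2 : ZMod (2 ^ r₂)) ^ r₁) = ((2 ^ r₁ : ℕ) : ZMod (2 ^ r₂)) := by push_cast; ring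
  rw [h1, ZMod.addOrderOf_coe _ (pow_ne_zero _ two_ne_zero),
    Nat.gcd_eq_right (pow_dvd_pow 2 h), Nat.pow_div h (by norm_num)]

private lemma castHom_surj {m n : ℕ} [NeZero m] (h : m ∣ n) :
    Function.Surjective (ZMod.castHom h (ZMod m)) := fun z =>
  ⟨(z.val : ZMod n), by rw [map_natCast]; exact ZMod.natCast_rightInverse z⟩

private lemma zmod2_cases : ∀ q : ZMod 2, q = 0 ∨ q = 1 := by decide

private lemma zmod22_two_smul : ∀ x : ZMod 2 × ZMod 2, (2 : ℕ) • x = 0 := by decide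

private lemma nat_lcm_eq_left {m d : ℕ} (h : d ∣ m) : Nat.lcm m d = m :=
  Nat.dvd_antisymm (Nat.lcm_dvd dvd_rfl h) (Nat.dvd_lcm_left m d)

private lemma case3core (r₁ r₂ : ℕ) (hr₁ : 1 ≤ r₁) (hr : r₁ < r₂)
    (v : ZMod 2 × ZMod 2) (hv : v ≠ 0)
    (π σ : ZMod 2 × ZMod 2 →+ ZMod 2)
    (hπ : π v = 1) (hσ : σ v = 0)
    (w : ZMod 2 × ZMod 2) (hw1 : π w = 0) (hw2 : σ w = 1)
    (ψ : ℤ →+ ZMod (2 ^ r₂) × (ZMod 2 × ZMod 2))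
    (hψ1 : ψ 1 = ((2 : ZMod (2 ^ r₂)) ^ r₁, v)) :
    Nonempty (((ZMod (2 ^ r₂) × (ZMod 2 × ZMod 2)) ⧸ ψ.range) ≃+
      (ZMod (2 ^ (r₁ + 1)) × ZMod 2)) := by
  haveI : NeZero ((2:ℕ) ^ r₂) := ⟨pow_ne_zero _ two_ne_zero⟩
  haveI : NeZero ((2:ℕ) ^ (r₁+1)) := ⟨pow_ne_zero _ two_ne_zero⟩
  haveI : Fact (Nat.Prime 2) := ⟨Nat.prime_two⟩
  have hdvd : (2:ℕ) ^ (r₁+1) ∣ 2 ^ r₂ := pow_dvd_pow 2 (by omega)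
  set cast₁ : ZMod (2^r₂) →+ ZMod (2^(r₁+1)) :=
    (ZMod.castHom hdvd (ZMod (2^(r₁+1)))).toAddMonoidHom with hcast₁
  have hself : (2 : ZMod (2^(r₁+1)))^r₁ + (2 : ZMod (2^(r₁+1)))^r₁ = 0 := by
    have h := ZMod.natCast_self (2^(r₁+1))
    push_cast at h
    rw [← two_mul, mul_comm, ← pow_succ] at *
    exact h
  have hzero : ((2:ℤ)) • ((2 : ZMod (2^(r₁+1)))^r₁) = 0 := by
    rw [two_zsmul]; exact hself
  set h2 : ZMod 2 →+ ZMod (2^(r₁+1)) :=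
    ZMod.lift 2 ⟨zmultiplesHom _ ((2 : ZMod (2^(r₁+1)))^r₁), hzero⟩ with hh2
  have hh2one : h2 1 = (2 : ZMod (2^(r₁+1)))^r₁ := by
    rw [hh2, show (1 : ZMod 2) = ((1:ℤ) : ZMod 2) by norm_cast, ZMod.lift_coe]
    simp [zmultiplesHom_apply]
  set φ : ZMod (2^r₂) × (ZMod 2 × ZMod 2) →+ ZMod (2^(r₁+1)) × ZMod 2 :=
    (cast₁.comp (AddMonoidHom.fst _ _) +
      (h2.comp π).comp (AddMonoidHom.snd _ _)).prod
      (σ.comp (AddMonoidHom.snd _ _)) with hφ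
  have hφ_apply : ∀ x y, φ (x, y) = (cast₁ x + h2 (π y), σ y) := fun x y => rfl
  have hs : Function.Surjective φ := by
    rintro ⟨p, q⟩
    obtain ⟨y, hy1, hy2⟩ : ∃ y, π y = 0 ∧ σ y = q := by
      rcases zmod2_cases q with rfl | rfl
      · exact ⟨0, map_zero _, map_zero _⟩
      · exact ⟨w, hw1, hw2⟩
    obtain ⟨x, hx⟩ := castHom_surj hdvd p
    exact ⟨(x, y), by rw [hφ_apply, hy1, hy2, map_zero, add_zero]; exact Prod.ext hx rfl⟩
  have h0 : φ (ψ 1) = 0 := by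
    rw [hψ1, hφ_apply, hπ, hσ, hh2one]
    refine Prod.ext ?_ rfl
    show cast₁ ((2 : ZMod (2^r₂))^r₁) + (2 : ZMod (2^(r₁+1)))^r₁ = 0
    rw [hcast₁]
    simp only [RingHom.toAddMonoidHom_eq_coe, AddMonoidHom.coe_coe, map_pow, map_ofNat]
    exact hself
  have hcard : Nat.card (ZMod (2^r₂) × (ZMod 2 × ZMod 2)) =
      Nat.card (ZMod (2^(r₁+1)) × ZMod 2) * addOrderOf (ψ 1) := by
    have hov : addOrderOf v = 2 := addOrderOf_eq_prime (zmod22_two_smul v) hv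
    obtain ⟨k, hk⟩ : ∃ k, r₂ = r₁ + (k+1) := ⟨r₂ - r₁ - 1, by omega⟩
    subst hk
    rw [hψ1, Prod.addOrderOf, hov, ord2pow _ _ (by omega)]
    have hsub : r₁ + (k+1) - r₁ = k + 1 := by omega
    rw [hsub, nat_lcm_eq_left (dvd_pow_self 2 (Nat.succ_ne_zero k))]
    simp only [Nat.card_prod, Nat.card_zmod]
    rw [pow_add, pow_succ, pow_succ]
    ring
  exact key ψ φ hs h0 hcard

private lemma zmod4_unit : ∀ a u : ZMod 4, a * u = 1 → u = 1 ∨ u = 3 := by decide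

private lemma zmod22_ne : ∀ v : ZMod 2 × ZMod 2, v ≠ 0 →
    v = (1, 0) ∨ v = (0, 1) ∨ v = (1, 1) := by decide

private lemma ord_u {u : ZMod 4} (h : u = 1 ∨ u = 3) : addOrderOf u = 4 := by
  rcases h with rfl | rfl
  · exact ZMod.addOrderOf_one 4
  · rw [show (3 : ZMod 4) = -1 by decide, addOrderOf_neg]
    exact ZMod.addOrderOf_one 4

private lemma case1core (u : ZMod 4) (hmu : (2 : ZMod 4) + 2 * u = 0)
    (hord : addOrderOf u = 4)
    (ψ : ℤ →+ ZMod (2 ^ 2) × ZMod 4)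
    (hψ1 : ψ 1 = ((2 : ZMod (2 ^ 2)) ^ 1, u)) :
    Nonempty (((ZMod (2 ^ 2) × ZMod 4) ⧸ ψ.range) ≃+ ZMod 4) := by
  have hdvd : (4:ℕ) ∣ 2 ^ 2 := by norm_num
  set cast₄ : ZMod (2^2) →+ ZMod 4 := (ZMod.castHom hdvd (ZMod 4)).toAddMonoidHom with hcast
  set φ : ZMod (2^2) × ZMod 4 →+ ZMod 4 :=
    cast₄.comp (AddMonoidHom.fst _ _) +
      (AddMonoidHom.mulLeft (2 : ZMod 4)).comp (AddMonoidHom.snd _ _) with hφ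
  have hφ_apply : ∀ x y, φ (x, y) = cast₄ x + 2 * y := fun x y => rfl
  have hs : Function.Surjective φ := by
    intro z
    obtain ⟨x, hx⟩ := castHom_surj hdvd z
    exact ⟨(x, 0), by rw [hφ_apply, mul_zero, add_zero]; exact hx⟩
  have h0 : φ (ψ 1) = 0 := by
    rw [hψ1, hφ_apply, hcast]
    simp only [RingHom.toAddMonoidHom_eq_coe, AddMonoidHom.coe_coe, map_pow, map_ofNat]
    rw [pow_one]
    exact hmu
  have hcard : Nat.card (ZMod (2^2) × ZMod 4) = Nat.card (ZMod 4) * addOrderOf (ψ 1) := by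
    rw [hψ1, Prod.addOrderOf, hord, ord2pow 1 2 one_le_two]
    simp only [Nat.card_prod, Nat.card_zmod]
    rfl
  exact key ψ φ hs h0 hcard

private lemma case2core (r₂ : ℕ) (h3 : 3 ≤ r₂) (u : ZMod 4) (m : ℤ) (hu : u = (m : ZMod 4))
    (c : ZMod 8) (hc4 : (4:ℤ) • c = 0) (hmc : (2 : ZMod 8) + m • c = 0)
    (hord : addOrderOf u = 4)
    (ψ : ℤ →+ ZMod (2 ^ r₂) × ZMod 4)
    (hψ1 : ψ 1 = ((2 : ZMod (2 ^ r₂)) ^ 1, u)) :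
    Nonempty (((ZMod (2 ^ r₂) × ZMod 4) ⧸ ψ.range) ≃+ ZMod 8) := by
  haveI : NeZero ((2:ℕ) ^ r₂) := ⟨pow_ne_zero _ two_ne_zero⟩
  have hdvd : (8:ℕ) ∣ 2 ^ r₂ := (show (8:ℕ) = 2^3 by norm_num) ▸ pow_dvd_pow 2 h3
  set cast₈ : ZMod (2^r₂) →+ ZMod 8 := (ZMod.castHom hdvd (ZMod 8)).toAddMonoidHom with hcast
  set h4 : ZMod 4 →+ ZMod 8 :=
    ZMod.lift 4 ⟨zmultiplesHom _ c, by rw [zmultiplesHom_apply]; exact hc4⟩ with hh4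
  have hh4u : h4 u = m • c := by rw [hu, hh4, ZMod.lift_coe, zmultiplesHom_apply]
  set φ : ZMod (2^r₂) × ZMod 4 →+ ZMod 8 :=
    cast₈.comp (AddMonoidHom.fst _ _) + h4.comp (AddMonoidHom.snd _ _) with hφ
  have hφ_apply : ∀ x y, φ (x, y) = cast₈ x + h4 y := fun x y => rfl
  have hs : Function.Surjective φ := by
    intro z
    obtain ⟨x, hx⟩ := castHom_surj hdvd z
    exact ⟨(x, 0), by rw [hφ_apply, map_zero, add_zero]; exact hx⟩
  have h0 : φ (ψ 1) = 0 := by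
    rw [hψ1, hφ_apply, hh4u, hcast]
    simp only [RingHom.toAddMonoidHom_eq_coe, AddMonoidHom.coe_coe, map_pow, map_ofNat]
    rw [pow_one]
    exact hmc
  have hcard : Nat.card (ZMod (2^r₂) × ZMod 4) = Nat.card (ZMod 8) * addOrderOf (ψ 1) := by
    obtain ⟨k, hk⟩ : ∃ k, r₂ = k + 3 := ⟨r₂ - 3, by omega⟩
    subst hk
    rw [hψ1, Prod.addOrderOf, hord, ord2pow 1 _ (by omega)]
    have hsub : k + 3 - 1 = k + 2 := by omega
    rw [hsub, show (4:ℕ) = 2^2 by norm_num,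
      nat_lcm_eq_left (pow_dvd_pow 2 (by omega : 2 ≤ k + 2))]
    simp only [Nat.card_prod, Nat.card_zmod]
    rw [pow_add, pow_add]
    norm_num
    ring
  exact key ψ φ hs h0 hcard


/-- For `r₂ > r₁ ≥ 1` there is a right exact sequence
`ℤ --(2^{r₁}, λ)--> ℤ/2^{r₂} ⊕ C → Q → 0`, where `Q` is the cokernel of the map sending `1` to
`(2^{r₁}, λ(1))`.  If `r₁ = 1`, `C = ℤ/4` and `λ` surjective, then `Q ≅ ℤ/4` when `r₂ = 2` and
`Q ≅ ℤ/8` when `r₂ ≥ 3`.  If `r₁ > 1`, `C = ℤ/2 ⊕ ℤ/2` and `λ` nontrivial, then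
`Q ≅ ℤ/2^{r₁+1} ⊕ ℤ/2`. -/
theorem cokernel_computation (r₁ r₂ : ℕ) (hr₁ : 1 ≤ r₁) (hr : r₁ < r₂) :
    (r₁ = 1 → ∀ lam : ℤ →+ ZMod 4, Function.Surjective lam →
      ∀ ψ : ℤ →+ ZMod (2 ^ r₂) × ZMod 4,
        ψ = (zmultiplesHom (ZMod (2 ^ r₂)) ((2 : ZMod (2 ^ r₂)) ^ r₁)).prod lam →
        (r₂ = 2 → Nonempty (((ZMod (2 ^ r₂) × ZMod 4) ⧸ ψ.range) ≃+ ZMod 4)) ∧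
        (3 ≤ r₂ → Nonempty (((ZMod (2 ^ r₂) × ZMod 4) ⧸ ψ.range) ≃+ ZMod 8))) ∧
    (1 < r₁ → ∀ lam : ℤ →+ ZMod 2 × ZMod 2, lam ≠ 0 →
      ∀ ψ : ℤ →+ ZMod (2 ^ r₂) × (ZMod 2 × ZMod 2),
        ψ = (zmultiplesHom (ZMod (2 ^ r₂)) ((2 : ZMod (2 ^ r₂)) ^ r₁)).prod lam →
        Nonempty (((ZMod (2 ^ r₂) × (ZMod 2 × ZMod 2)) ⧸ ψ.range) ≃+
          (ZMod (2 ^ (r₁ + 1)) × ZMod 2))) := by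
  constructor
  · rintro rfl lam hsurj ψ hψ
    have hψ1 : ψ 1 = ((2 : ZMod (2 ^ r₂)) ^ 1, lam 1) := by
      rw [hψ]
      simp [AddMonoidHom.prod_apply, zmultiplesHom_apply]
    obtain ⟨n, hn⟩ := hsurj 1
    have h1 : ((n : ZMod 4)) * lam 1 = 1 := by
      rw [← zsmul_eq_mul, ← map_zsmul, smul_eq_mul, mul_one, hn]
    have hu : lam 1 = 1 ∨ lam 1 = 3 := zmod4_unit _ _ h1
    have hord : addOrderOf (lam 1) = 4 := ord_u hu
    constructor
    · rintro rfl
      refine case1core (lam 1) ?_ hord ψ hψ1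
      rcases hu with hu | hu <;> rw [hu] <;> decide
    · intro h3
      rcases hu with hu | hu
      · exact case2core r₂ h3 (lam 1) 1 (by rw [hu]; norm_cast) 6 (by decide)
          (by rw [one_smul]; decide) hord ψ hψ1
      · exact case2core r₂ h3 (lam 1) 3 (by rw [hu]; norm_cast) 2 (by decide)
          (by decide) hord ψ hψ1
  · intro hr₁' lam hlam ψ hψ
    have hψ1 : ψ 1 = ((2 : ZMod (2 ^ r₂)) ^ r₁, lam 1) := by
      rw [hψ]
      simp [AddMonoidHom.prod_apply, zmultiplesHom_apply]
    have hv : lam 1 ≠ 0 := fun h => hlam (AddMonoidHom.ext_int (h.trans rfl))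
    rcases zmod22_ne _ hv with hu | hu | hu
    · exact case3core r₁ r₂ hr₁ hr (lam 1) hv
        (AddMonoidHom.fst _ _) (AddMonoidHom.snd _ _)
        (by rw [hu]; rfl) (by rw [hu]; rfl) (0, 1) rfl rfl ψ hψ1
    · exact case3core r₁ r₂ hr₁ hr (lam 1) hv
        (AddMonoidHom.snd _ _) (AddMonoidHom.fst _ _)
        (by rw [hu]; rfl) (by rw [hu]; rfl) (1, 0) rfl rfl ψ hψ1
    · exact case3core r₁ r₂ hr₁ hr (lam 1) hv
        (AddMonoidHom.fst _ _) (AddMonoidHom.fst _ _ + AddMonoidHom.snd _ _)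
        (by rw [hu]; rfl) (by rw [hu]; rfl) (0, 1) rfl rfl ψ hψ1
end
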